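/- arXiv:1712.08106 — 10 statements merged into one kernel-verified Lean document; each statement's English description precedes it below -/
import Mathlib

section
/- Let k ≠ 0 be a real constant and let u, w : ℝ² → ℝ be twice continuously differentiable functions of (x₁, x₂) satisfying the Bäcklund relations ∂u/∂x₂ = k⁻¹ sin(u − w) and ∂u/∂x₁ = ∂w/∂x₁ + k sin u at every point. Then w satisfies the sine-Gordon equation ∂²w/∂x₁∂x₂ = sin w at every point. -/
/-!
Differentiate the second Bäcklund relation in `x₂` and the first in `x₁`: this gives
`w_{x₁x₂} = u_{x₁x₂} - cos u · sin (u - w)` and `u_{x₂x₁} = cos (u - w) · sin u`.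
Since `u` is `C²` its mixed partials agree, so
`w_{x₁x₂} = sin u cos (u - w) - cos u sin (u - w) = sin w`.
-/

/-- Partial derivative with respect to the first variable. -/
noncomputable def pd1 (u : ℝ × ℝ → ℝ) (p : ℝ × ℝ) : ℝ := deriv (fun x₁ => u (x₁, p.2)) p.1

/-- Partial derivative with respect to the second variable. -/
noncomputable def pd2 (u : ℝ × ℝ → ℝ) (p : ℝ × ℝ) : ℝ := deriv (fun x₂ => u (p.1, x₂)) p.2

section PartialDerivatives

variable {f : ℝ × ℝ → ℝ} {p : ℝ × ℝ}

theorem hasDerivAt_fderiv_apply_fst (hf : DifferentiableAt ℝ f p) :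
    HasDerivAt (fun x => f (x, p.2)) (fderiv ℝ f p (1, 0)) p.1 :=
  hf.hasFDerivAt.comp_hasDerivAt p.1 ((hasDerivAt_id p.1).prodMk (hasDerivAt_const p.1 p.2))

theorem hasDerivAt_fderiv_apply_snd (hf : DifferentiableAt ℝ f p) :
    HasDerivAt (fun y => f (p.1, y)) (fderiv ℝ f p (0, 1)) p.2 :=
  hf.hasFDerivAt.comp_hasDerivAt p.2 ((hasDerivAt_const p.2 p.1).prodMk (hasDerivAt_id p.2))

theorem pd1_eq_fderiv (hf : DifferentiableAt ℝ f p) : pd1 f p = fderiv ℝ f p (1, 0) :=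
  (hasDerivAt_fderiv_apply_fst hf).deriv

theorem pd2_eq_fderiv (hf : DifferentiableAt ℝ f p) : pd2 f p = fderiv ℝ f p (0, 1) :=
  (hasDerivAt_fderiv_apply_snd hf).deriv

theorem hasDerivAt_pd1 (hf : DifferentiableAt ℝ f p) :
    HasDerivAt (fun x => f (x, p.2)) (pd1 f p) p.1 :=
  pd1_eq_fderiv hf ▸ hasDerivAt_fderiv_apply_fst hf

theorem hasDerivAt_pd2 (hf : DifferentiableAt ℝ f p) :
    HasDerivAt (fun y => f (p.1, y)) (pd2 f p) p.2 :=
  pd2_eq_fderiv hf ▸ hasDerivAt_fderiv_apply_snd hf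

theorem contDiff_pd1 {n : WithTop ℕ∞} (hf : ContDiff ℝ (n + 1) f) :
    ContDiff ℝ n (pd1 f) := by
  have hd : Differentiable ℝ f := hf.differentiable (by simp)
  rw [show pd1 f = fun q => fderiv ℝ f q (1, 0) from funext fun q => pd1_eq_fderiv (hd q)]
  exact (hf.fderiv_right le_rfl).clm_apply contDiff_const

theorem contDiff_pd2 {n : WithTop ℕ∞} (hf : ContDiff ℝ (n + 1) f) :
    ContDiff ℝ n (pd2 f) := by
  have hd : Differentiable ℝ f := hf.differentiable (by simp)
  rw [show pd2 f = fun q => fderiv ℝ f q (0, 1) from funext fun q => pd2_eq_fderiv (hd q)]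
  exact (hf.fderiv_right le_rfl).clm_apply contDiff_const

theorem pd2_pd1_eq_pd1_pd2 (hf : ContDiff ℝ 2 f) (p : ℝ × ℝ) :
    pd2 (pd1 f) p = pd1 (pd2 f) p := by
  have hd : Differentiable ℝ f := hf.differentiable two_ne_zero
  have hd' : Differentiable ℝ (fderiv ℝ f) :=
    (hf.fderiv_right (m := 1) le_rfl).differentiable one_ne_zero
  rw [pd2_eq_fderiv ((contDiff_pd1 (n := 1) hf).differentiable one_ne_zero p),
    pd1_eq_fderiv ((contDiff_pd2 (n := 1) hf).differentiable one_ne_zero p),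
    show pd1 f = fun q => fderiv ℝ f q (1, 0) from funext fun q => pd1_eq_fderiv (hd q),
    show pd2 f = fun q => fderiv ℝ f q (0, 1) from funext fun q => pd2_eq_fderiv (hd q),
    fderiv_clm_apply (hd' p) (differentiableAt_const _),
    fderiv_clm_apply (hd' p) (differentiableAt_const _)]
  simpa using hf.contDiffAt.isSymmSndFDerivAt (by simp) (0, 1) (1, 0)

end PartialDerivatives

/-- If `u`, `w` satisfy the Bäcklund relations
`u_{x₂} = k⁻¹ sin(u − w)`, `u_{x₁} = w_{x₁} + k sin u` with `k ≠ 0`,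
then `w` satisfies the sine-Gordon equation `w_{x₁x₂} = sin w`. -/
theorem backlund_implies_sine_gordon (k : ℝ) (hk : k ≠ 0)
    (u w : ℝ × ℝ → ℝ) (hu : ContDiff ℝ 2 u) (hw : ContDiff ℝ 2 w)
    (h1 : ∀ p : ℝ × ℝ, pd2 u p = k⁻¹ * Real.sin (u p - w p))
    (h2 : ∀ p : ℝ × ℝ, pd1 u p = pd1 w p + k * Real.sin (u p)) :
    ∀ p : ℝ × ℝ, pd2 (pd1 w) p = Real.sin (w p) := by
  intro p
  have hud : Differentiable ℝ u := hu.differentiable two_ne_zero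
  have hwd : Differentiable ℝ w := hw.differentiable two_ne_zero
  have hpd1u : Differentiable ℝ (pd1 u) := (contDiff_pd1 (n := 1) hu).differentiable one_ne_zero
  have hw12 : pd2 (pd1 w) p = pd2 (pd1 u) p - k * (Real.cos (u p) * pd2 u p) := by
    rw [show pd1 w = fun q => pd1 u q - k * Real.sin (u q) from funext fun q => by linarith [h2 q]]
    exact ((hasDerivAt_pd2 (hpd1u p)).sub ((hasDerivAt_pd2 (hud p)).sin.const_mul k)).deriv
  have hu21 : pd1 (pd2 u) p = k⁻¹ * (Real.cos (u p - w p) * (pd1 u p - pd1 w p)) := by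
    rw [show pd2 u = fun q => k⁻¹ * Real.sin (u q - w q) from funext h1]
    exact (((hasDerivAt_pd1 (hud p)).sub (hasDerivAt_pd1 (hwd p))).sin.const_mul k⁻¹).deriv
  rw [hw12, pd2_pd1_eq_pd1_pd2 hu, hu21, h1 p, show pd1 u p - pd1 w p = k * Real.sin (u p) by
    linarith [h2 p]]
  calc k⁻¹ * (Real.cos (u p - w p) * (k * Real.sin (u p))) -
        k * (Real.cos (u p) * (k⁻¹ * Real.sin (u p - w p)))
      = Real.sin (u p) * Real.cos (u p - w p) - Real.cos (u p) * Real.sin (u p - w p) := by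
        field_simp
    _ = Real.sin (w p) := by rw [← Real.sin_sub, sub_sub_cancel]
end

section
/- Let F, f, φ : ℝ → ℝ with f, φ continuously differentiable, and suppose f′(s)·φ(s) = F(s) and φ(s) + φ′(s)·f(s) = F(s) for all s ∈ ℝ. Let D ⊆ ℝ² be an open set with x₁ ≠ 0 on D, and let u : D → ℝ be twice continuously differentiable satisfying the ansatz ∂u/∂x₁ = f(u)/x₁ and ∂u/∂x₂ = x₁·φ(u) at every point of D. Then u satisfies the nonlinear wave equation ∂²u/∂x₁∂x₂ = F(u) on D. -/
lemma pd2_congr_of_eqOn {v w : ℝ × ℝ → ℝ} {D : Set (ℝ × ℝ)} (hD : IsOpen D)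
    (hvw : Set.EqOn v w D) {p : ℝ × ℝ} (hp : p ∈ D) : pd2 v p = pd2 w p := by
  have hline : IsOpen {x₂ : ℝ | (p.1, x₂) ∈ D} := hD.preimage (by fun_prop)
  refine Filter.EventuallyEq.deriv_eq ?_
  filter_upwards [hline.mem_nhds hp] with x₂ hx₂ using hvw hx₂

lemma pd2_comp {g : ℝ → ℝ} {u : ℝ × ℝ → ℝ} {p : ℝ × ℝ} (hg : DifferentiableAt ℝ g (u p))
    (hu : DifferentiableAt ℝ u p) : pd2 (fun q => g (u q)) p = deriv g (u p) * pd2 u p :=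
  deriv_comp p.2 hg (hu.comp p.2 (by fun_prop))

lemma pd2_div_fst (v : ℝ × ℝ → ℝ) (p : ℝ × ℝ) : pd2 (fun q => v q / q.1) p = pd2 v p / p.1 :=
  deriv_div_const _

theorem ansatz_reduces_nonlinear_wave_general (F f φ : ℝ → ℝ)
    (hf : ContDiff ℝ 1 f)
    (hsys1 : ∀ s : ℝ, deriv f s * φ s = F s)
    (D : Set (ℝ × ℝ)) (hD : IsOpen D) (hx : ∀ p ∈ D, p.1 ≠ 0)
    (u : ℝ × ℝ → ℝ) (hu : ContDiffOn ℝ 2 u D)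
    (h1 : ∀ p ∈ D, pd1 u p = f (u p) / p.1)
    (h2 : ∀ p ∈ D, pd2 u p = p.1 * φ (u p)) :
    ∀ p ∈ D, pd2 (pd1 u) p = F (u p) := by
  intro p hp
  have hup : DifferentiableAt ℝ u p :=
    (hu.differentiableOn two_ne_zero).differentiableAt (hD.mem_nhds hp)
  calc pd2 (pd1 u) p = pd2 (fun q => f (u q) / q.1) p := pd2_congr_of_eqOn hD h1 hp
    _ = deriv f (u p) * (p.1 * φ (u p)) / p.1 := by
      rw [pd2_div_fst, pd2_comp (hf.differentiable one_ne_zero _) hup, h2 p hp]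
    _ = F (u p) := by field_simp [hx p hp]; exact hsys1 (u p)

/-- If `f, φ` solve the reduced system `f′φ = F`, `φ + φ′f = F`, and `u` satisfies
the ansatz `u_{x₁} = f(u)/x₁`, `u_{x₂} = x₁ φ(u)` on an open set `D` on which `x₁ ≠ 0`,
then `u` solves the nonlinear wave equation `u_{x₁x₂} = F(u)` on `D`. -/
theorem ansatz_reduces_nonlinear_wave (F f φ : ℝ → ℝ)
    (hf : ContDiff ℝ 1 f) (hφ : ContDiff ℝ 1 φ)
    (hsys1 : ∀ s : ℝ, deriv f s * φ s = F s)
    (hsys2 : ∀ s : ℝ, φ s + deriv φ s * f s = F s)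
    (D : Set (ℝ × ℝ)) (hD : IsOpen D) (hx : ∀ p ∈ D, p.1 ≠ 0)
    (u : ℝ × ℝ → ℝ) (hu : ContDiffOn ℝ 2 u D)
    (h1 : ∀ p ∈ D, pd1 u p = f (u p) / p.1)
    (h2 : ∀ p ∈ D, pd2 u p = p.1 * φ (u p)) :
    ∀ p ∈ D, pd2 (pd1 u) p = F (u p) :=
  ansatz_reduces_nonlinear_wave_general F f φ hf hsys1 D hD hx u hu h1 h2
end

section
/- Let α be a real constant, let A, B : ℝ → ℝ be differentiable, and let u : ℝ → ℝ be twice continuously differentiable and satisfy the ordinary differential equation u″(x) + α²u′(x) = 0 for all x. Define g(x) = A(u′(x) + α²u(x))·u(x) + B(u′(x) + α²u(x)). Then g is twice differentiable and satisfies g″(x) + α²g′(x) = 0 for all x. -/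
/-!
Along a solution of `u″ + α²u′ = 0` the argument `u′ + α²u` of `A` and `B` is a first integral:
its derivative is the left-hand side of the equation. Hence `g = A(k)·u + B(k)` for a constant `k`,
and an affine function of a solution of a linear homogeneous equation is again a solution.
-/

def IsSolutionOfDampedEq (c : ℝ) (u : ℝ → ℝ) : Prop :=
  Differentiable ℝ u ∧ Differentiable ℝ (deriv u) ∧ ∀ x, deriv (deriv u) x + c * deriv u x = 0

namespace IsSolutionOfDampedEq

variable {c : ℝ} {u : ℝ → ℝ}

theorem of_contDiff (hu : ContDiff ℝ 2 u) (hode : ∀ x, deriv (deriv u) x + c * deriv u x = 0) :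
    IsSolutionOfDampedEq c u :=
  ⟨hu.differentiable two_ne_zero,
    (((contDiff_succ_iff_deriv (n := 1)).mp hu).2.2).differentiable one_ne_zero, hode⟩

theorem deriv_add_mul_eq (hs : IsSolutionOfDampedEq c u) (x y : ℝ) :
    deriv u x + c * u x = deriv u y + c * u y := by
  obtain ⟨hu, hu', hode⟩ := hs
  have hderiv : ∀ z, deriv (fun z => deriv u z + c * u z) z = 0 := fun z => by
    rw [deriv_fun_add (hu' z) ((hu z).const_mul c), deriv_const_mul c (hu z), hode z]
  exact is_const_of_deriv_eq_zero (hu'.add (hu.const_mul c)) hderiv x y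

theorem const_mul_add (hs : IsSolutionOfDampedEq c u) (a b : ℝ) :
    IsSolutionOfDampedEq c (fun x => a * u x + b) := by
  obtain ⟨hu, hu', hode⟩ := hs
  have hderiv : deriv (fun x => a * u x + b) = fun x => a * deriv u x := funext fun x => by
    rw [deriv_add_const, deriv_const_mul a (hu x)]
  refine ⟨(hu.const_mul a).add_const b, ?_, fun x => ?_⟩
  · rw [hderiv]
    exact hu'.const_mul a
  · rw [hderiv, deriv_const_mul a (hu' x)]
    linear_combination a * hode x

end IsSolutionOfDampedEq

theorem characteristic_is_again_solution_general (α : ℝ) (A B : ℝ → ℝ)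
    (u : ℝ → ℝ) (hu : ContDiff ℝ 2 u)
    (hode : ∀ x : ℝ, deriv (deriv u) x + α ^ 2 * deriv u x = 0)
    (g : ℝ → ℝ)
    (hg : ∀ x : ℝ, g x = A (deriv u x + α ^ 2 * u x) * u x + B (deriv u x + α ^ 2 * u x)) :
    Differentiable ℝ g ∧ Differentiable ℝ (deriv g) ∧
      ∀ x : ℝ, deriv (deriv g) x + α ^ 2 * deriv g x = 0 := by
  have hs : IsSolutionOfDampedEq (α ^ 2) u := .of_contDiff hu hode
  set k := deriv u 0 + α ^ 2 * u 0
  have hg_affine : g = fun x => A k * u x + B k := funext fun x => by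
    rw [hg x, hs.deriv_add_mul_eq x 0, mul_comm]
  rw [hg_affine]
  exact hs.const_mul_add (A k) (B k)

/-- If `u` solves `u″ + α²u′ = 0` and `g = A(u′ + α²u)·u + B(u′ + α²u)` with `A, B`
differentiable, then `g` is twice differentiable and solves `g″ + α²g′ = 0`. -/
theorem characteristic_is_again_solution (α : ℝ) (A B : ℝ → ℝ)
    (hA : Differentiable ℝ A) (hB : Differentiable ℝ B)
    (u : ℝ → ℝ) (hu : ContDiff ℝ 2 u)
    (hode : ∀ x : ℝ, deriv (deriv u) x + α ^ 2 * deriv u x = 0)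
    (g : ℝ → ℝ)
    (hg : ∀ x : ℝ, g x = A (deriv u x + α ^ 2 * u x) * u x + B (deriv u x + α ^ 2 * u x)) :
    Differentiable ℝ g ∧ Differentiable ℝ (deriv g) ∧
      ∀ x : ℝ, deriv (deriv g) x + α ^ 2 * deriv g x = 0 :=
  characteristic_is_again_solution_general α A B u hu hode g hg
end

section
/- Let α be a real constant, let h : ℝ → ℝ be any function, and let u : ℝ → ℝ be twice continuously differentiable and satisfy u″(x) + α²u′(x) = 0 for all x. Define g(x) = e^{−α²x}·h(u′(x) + α²u(x)). Then g is twice differentiable and satisfies g″(x) + α²g′(x) = 0 for all x. -/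
/-!
Along a solution of `u″ + c u′ = 0` the argument `u′ + c u` of `h` has derivative
`u″ + c u′ = 0`, so it is constant. Hence `g` is a constant multiple of `e^{−α² x}`,
which solves the equation.
-/

open Real

theorem deriv_add_const_mul_eq_of_deriv_deriv_add_const_mul_eq_zero {c : ℝ} {u : ℝ → ℝ}
    (hu : Differentiable ℝ u) (hu' : Differentiable ℝ (deriv u))
    (hode : ∀ x, deriv (deriv u) x + c * deriv u x = 0) (x y : ℝ) :
    deriv u x + c * u x = deriv u y + c * u y :=
  is_const_of_deriv_eq_zero (f := fun x => deriv u x + c * u x) (hu'.add (hu.const_mul c))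
    (fun z => by
      rw [deriv_fun_add (hu' z) ((hu z).const_mul c), deriv_const_mul c (hu z)]
      exact hode z) x y

theorem hasDerivAt_exp_mul_mul_const (k C x : ℝ) :
    HasDerivAt (fun y => exp (k * y) * C) (k * (exp (k * x) * C)) x := by
  have hlin : HasDerivAt (fun y => k * y) k x := by
    simpa using (hasDerivAt_id x).const_mul k
  exact (((hasDerivAt_exp (k * x)).comp x hlin).mul_const C).congr_deriv (by ring)

theorem deriv_exp_mul_mul_const (k C : ℝ) :
    deriv (fun y => exp (k * y) * C) = fun x => k * (exp (k * x) * C) :=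
  funext fun x => (hasDerivAt_exp_mul_mul_const k C x).deriv

theorem exp_mul_mul_const_solves (k C : ℝ) :
    Differentiable ℝ (fun y => exp (k * y) * C) ∧
      Differentiable ℝ (deriv fun y => exp (k * y) * C) ∧
      ∀ x, deriv (deriv fun y => exp (k * y) * C) x
        - k * deriv (fun y => exp (k * y) * C) x = 0 := by
  have hd2 : ∀ x, HasDerivAt (deriv fun y => exp (k * y) * C) (k * (k * (exp (k * x) * C))) x :=
    fun x => by
      rw [deriv_exp_mul_mul_const]
      exact (hasDerivAt_exp_mul_mul_const k C x).const_mul k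
  refine ⟨fun x => (hasDerivAt_exp_mul_mul_const k C x).differentiableAt,
    fun x => (hd2 x).differentiableAt, fun x => ?_⟩
  rw [(hd2 x).deriv, deriv_exp_mul_mul_const]
  ring

/-- If `u` solves `u″ + α²u′ = 0` and `g(x) = e^{−α²x} h(u′(x) + α²u(x))` with `h` an
arbitrary function, then `g` is twice differentiable and solves `g″ + α²g′ = 0`. -/
theorem exponential_characteristic_is_again_solution (α : ℝ) (h : ℝ → ℝ)
    (u : ℝ → ℝ) (hu : ContDiff ℝ 2 u)
    (hode : ∀ x : ℝ, deriv (deriv u) x + α ^ 2 * deriv u x = 0)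
    (g : ℝ → ℝ)
    (hg : ∀ x : ℝ, g x = Real.exp (-α ^ 2 * x) * h (deriv u x + α ^ 2 * u x)) :
    Differentiable ℝ g ∧ Differentiable ℝ (deriv g) ∧
      ∀ x : ℝ, deriv (deriv g) x + α ^ 2 * deriv g x = 0 := by
  have hconst := deriv_add_const_mul_eq_of_deriv_deriv_add_const_mul_eq_zero
    (hu.differentiable two_ne_zero) hu.differentiable_deriv_two hode
  have hg_exp : g = fun x => exp (-α ^ 2 * x) * h (deriv u 0 + α ^ 2 * u 0) :=
    funext fun x => by rw [hg, hconst x 0]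
  obtain ⟨hdiff, hdiff', hsol⟩ :=
    exp_mul_mul_const_solves (-α ^ 2) (h (deriv u 0 + α ^ 2 * u 0))
  subst hg_exp
  exact ⟨hdiff, hdiff', fun x => by linarith [hsol x]⟩
end

section
/- Let α be a real constant, let F : ℝ → ℝ be twice continuously differentiable, and let u : ℝ² → ℝ be four times continuously differentiable in (x₁, x₂) and satisfy ∂²u/∂x₁² + α²·∂u/∂x₁ = 0 at every point. Define g(x₁, x₂) = ∂²u/∂x₁∂x₂ − (∂u/∂x₁)·F(∂u/∂x₁ + α²u). Then ∂²g/∂x₁² + α²·∂g/∂x₁ = 0 at every point. -/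
open Real

theorem eq_exp_mul_of_deriv_eq_mul {f : ℝ → ℝ} {c : ℝ} (hf : Differentiable ℝ f)
    (h : ∀ x, deriv f x = c * f x) (x : ℝ) : f x = exp (c * x) * f 0 := by
  have hconst : ∀ y, deriv (fun y => exp (-(c * y)) * f y) y = 0 := fun y => by
    have hexp : HasDerivAt (fun y => exp (-(c * y))) (exp (-(c * y)) * -(c * 1)) y :=
      ((hasDerivAt_id y).const_mul c).neg.exp
    rw [deriv_fun_mul hexp.differentiableAt (hf y), hexp.deriv, h]
    ring
  have hdiff : Differentiable ℝ (fun y => exp (-(c * y)) * f y) := by fun_prop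
  have := is_const_of_deriv_eq_zero hdiff hconst x 0
  simp only [mul_zero, neg_zero, exp_zero, one_mul] at this
  rw [← this, ← mul_assoc, ← exp_add, add_neg_cancel, exp_zero, one_mul]

section LinearODE

variable {f : ℝ → ℝ} {k : ℝ}

theorem deriv_eq_exp_mul_of_ode (hf : ContDiff ℝ 2 f)
    (hode : ∀ x, deriv (deriv f) x + k * deriv f x = 0) (x : ℝ) :
    deriv f x = exp (-k * x) * deriv f 0 :=
  eq_exp_mul_of_deriv_eq_mul hf.differentiable_deriv_two
    (fun y => by linarith [hode y]) x

theorem deriv_add_mul_eq_of_ode (hf : ContDiff ℝ 2 f)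
    (hode : ∀ x, deriv (deriv f) x + k * deriv f x = 0) (x : ℝ) :
    deriv f x + k * f x = deriv f 0 + k * f 0 := by
  have hf' : Differentiable ℝ (deriv f) := hf.differentiable_deriv_two
  have hf₀ : Differentiable ℝ f := hf.differentiable (by norm_num)
  refine is_const_of_deriv_eq_zero (hf'.add (hf₀.const_mul k)) (fun y => ?_) x 0
  rw [deriv_add (hf' y) ((hf₀ y).const_mul k), deriv_const_mul _ (hf₀ y), hode]

end LinearODE

def IsExpInFst (c : ℝ) (v : ℝ × ℝ → ℝ) : Prop :=
  ∀ x y, v (x, y) = exp (c * x) * v (0, y)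

namespace IsExpInFst

variable {c : ℝ} {v w : ℝ × ℝ → ℝ}

theorem sub (hv : IsExpInFst c v) (hw : IsExpInFst c w) : IsExpInFst c (fun p => v p - w p) :=
  fun x y => by simp only [hv x y, hw x y, mul_sub]

theorem mul_of_eq_fst_zero (hv : IsExpInFst c v) (hw : ∀ x y, w (x, y) = w (0, y)) :
    IsExpInFst c (fun p => v p * w p) :=
  fun x y => by simp only [hv x y, hw x y, mul_assoc]

theorem const_mul (a : ℝ) (hv : IsExpInFst c v) : IsExpInFst c (fun p => a * v p) :=
  fun x y => by simp only [hv x y, mul_left_comm a]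

theorem pd2 (hv : IsExpInFst c v) : IsExpInFst c (pd2 v) := fun x y => by
  simp only [_root_.pd2, hv x, deriv_const_mul_field]

theorem pd1_eq (hv : IsExpInFst c v) : pd1 v = fun p => c * v p := by
  ext ⟨x, y⟩
  have hslice : (fun t => v (t, y)) = fun t => exp (c * t) * v (0, y) := funext fun t => hv t y
  have hexp : HasDerivAt (fun t => exp (c * t)) (exp (c * x) * (c * 1)) x :=
    ((hasDerivAt_id x).const_mul c).exp
  simp only [_root_.pd1, hslice, hv x y, deriv_mul_const_field, hexp.deriv]
  ring

theorem pd1_pd1_add_mul_eq_zero (hv : IsExpInFst (-k) v) (p : ℝ × ℝ) :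
    pd1 (pd1 v) p + k * pd1 v p = 0 := by
  rw [hv.pd1_eq, (hv.const_mul (-k)).pd1_eq]
  ring

end IsExpInFst

section Slices

variable {u : ℝ × ℝ → ℝ} {k : ℝ}

theorem contDiff_two_slice (hu : ContDiff ℝ 2 u) (y : ℝ) : ContDiff ℝ 2 (fun x => u (x, y)) :=
  hu.comp (contDiff_id.prodMk contDiff_const)

theorem isExpInFst_pd1_of_ode (hu : ContDiff ℝ 2 u)
    (hode : ∀ p, pd1 (pd1 u) p + k * pd1 u p = 0) : IsExpInFst (-k) (pd1 u) := fun x y =>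
  deriv_eq_exp_mul_of_ode (contDiff_two_slice hu y) (fun t => hode (t, y)) x

theorem pd1_add_mul_eq_of_ode (hu : ContDiff ℝ 2 u)
    (hode : ∀ p, pd1 (pd1 u) p + k * pd1 u p = 0) (x y : ℝ) :
    pd1 u (x, y) + k * u (x, y) = pd1 u (0, y) + k * u (0, y) :=
  deriv_add_mul_eq_of_ode (contDiff_two_slice hu y) (fun t => hode (t, y)) x

end Slices

theorem lie_backlund_characteristic_general (α : ℝ) (F : ℝ → ℝ)
    (u : ℝ × ℝ → ℝ) (hu : ContDiff ℝ 4 u)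
    (hode : ∀ p : ℝ × ℝ, pd1 (pd1 u) p + α ^ 2 * pd1 u p = 0)
    (g : ℝ × ℝ → ℝ)
    (hg : ∀ p : ℝ × ℝ, g p = pd2 (pd1 u) p - pd1 u p * F (pd1 u p + α ^ 2 * u p)) :
    ∀ p : ℝ × ℝ, pd1 (pd1 g) p + α ^ 2 * pd1 g p = 0 := by
  have hu₂ : ContDiff ℝ 2 u := hu.of_le (by norm_num)
  have hux : IsExpInFst (-α ^ 2) (pd1 u) := isExpInFst_pd1_of_ode hu₂ hode
  have hconst : ∀ x y,
      F (pd1 u (x, y) + α ^ 2 * u (x, y)) = F (pd1 u (0, y) + α ^ 2 * u (0, y)) :=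
    fun x y => by rw [pd1_add_mul_eq_of_ode hu₂ hode x y]
  have hgexp : IsExpInFst (-α ^ 2) g := by
    rw [funext hg]
    exact hux.pd2.sub (hux.mul_of_eq_fst_zero hconst)
  exact hgexp.pd1_pd1_add_mul_eq_zero

/-- Lie–Bäcklund symmetry: if `u` satisfies `u_{x₁x₁} + α²u_{x₁} = 0` everywhere, then the
characteristic `g = u_{x₁x₂} − u_{x₁}·F(u_{x₁} + α²u)` satisfies `g_{x₁x₁} + α²g_{x₁} = 0`. -/
theorem lie_backlund_characteristic (α : ℝ) (F : ℝ → ℝ) (hF : ContDiff ℝ 2 F)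
    (u : ℝ × ℝ → ℝ) (hu : ContDiff ℝ 4 u)
    (hode : ∀ p : ℝ × ℝ, pd1 (pd1 u) p + α ^ 2 * pd1 u p = 0)
    (g : ℝ × ℝ → ℝ)
    (hg : ∀ p : ℝ × ℝ, g p = pd2 (pd1 u) p - pd1 u p * F (pd1 u p + α ^ 2 * u p)) :
    ∀ p : ℝ × ℝ, pd1 (pd1 g) p + α ^ 2 * pd1 g p = 0 :=
  lie_backlund_characteristic_general α F u hu hode g hg
end

section
/- Let α ≠ 0 and k be real constants, let F, A, B, h : ℝ → ℝ, and let φ₁, φ₂ : ℝ → ℝ be continuously differentiable and satisfy for all x₂ the reduced system A(α²φ₁)φ₁ + B(α²φ₁) + kφ₁′ = 0 and −α²φ₂′ = −α²φ₂F(α²φ₁) + A(α²φ₁)φ₂ + kφ₂′ + h(α²φ₁). Then u(x₁, x₂) = φ₁(x₂) + e^{−α²x₁}φ₂(x₂) satisfies the partial differential equation ∂²u/∂x₁∂x₂ = (∂u/∂x₁)·F(∂u/∂x₁ + α²u) + A(∂u/∂x₁ + α²u)·u + B(∂u/∂x₁ + α²u) + k·∂u/∂x₂ + e^{−α²x₁}·h(∂u/∂x₁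 + α²u) at every point (x₁, x₂) ∈ ℝ². -/
/-!
On the ansatz `u = φ₁(x₂) + g(x₁) φ₂(x₂)` with `g(x₁) = e^{−α²x₁}` one has `u_{x₁} = −α² g φ₂`,
so `u_{x₁} + α²u = α²φ₁` depends on `x₂` alone, `u_{x₂} = φ₁′ + g φ₂′` and `u_{x₁x₂} = −α² g φ₂′`.
After these substitutions the equation is `g` times the second reduced equation minus the first.
-/

section Separated

variable {u : ℝ × ℝ → ℝ} {ψ g φ : ℝ → ℝ}

theorem pd1_of_separated (hu : ∀ q, u q = ψ q.2 + g q.1 * φ q.2) {p : ℝ × ℝ}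
    (hg : DifferentiableAt ℝ g p.1) : pd1 u p = deriv g p.1 * φ p.2 := by
  simp only [pd1, hu]
  rw [deriv_const_add, deriv_mul_const hg]

theorem pd2_of_separated (hu : ∀ q, u q = ψ q.2 + g q.1 * φ q.2) {p : ℝ × ℝ}
    (hψ : DifferentiableAt ℝ ψ p.2) (hφ : DifferentiableAt ℝ φ p.2) :
    pd2 u p = deriv ψ p.2 + g p.1 * deriv φ p.2 := by
  simp only [pd2, hu]
  rw [deriv_fun_add hψ (hφ.const_mul _), deriv_const_mul _ hφ]

theorem pd2_pd1_of_separated (hu : ∀ q, u q = ψ q.2 + g q.1 * φ q.2) {p : ℝ × ℝ}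
    (hg : DifferentiableAt ℝ g p.1) (hφ : DifferentiableAt ℝ φ p.2) :
    pd2 (pd1 u) p = deriv g p.1 * deriv φ p.2 := by
  have hu₁ : ∀ x₂, pd1 u (p.1, x₂) = deriv g p.1 * φ x₂ := fun x₂ =>
    pd1_of_separated hu (p := (p.1, x₂)) hg
  simp only [pd2, hu₁]
  exact deriv_const_mul _ hφ

end Separated

theorem deriv_exp_const_mul (c x : ℝ) :
    deriv (fun y => Real.exp (c * y)) x = c * Real.exp (c * x) := by
  simpa using congrFun (iteratedDeriv_exp_const_mul 1 c) x

theorem reduced_system_implies_pde_general (α k : ℝ) (F A B h : ℝ → ℝ)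
    (φ₁ φ₂ : ℝ → ℝ) (hφ₁ : ContDiff ℝ 1 φ₁) (hφ₂ : ContDiff ℝ 1 φ₂)
    (hred1 : ∀ x₂ : ℝ,
      A (α ^ 2 * φ₁ x₂) * φ₁ x₂ + B (α ^ 2 * φ₁ x₂) + k * deriv φ₁ x₂ = 0)
    (hred2 : ∀ x₂ : ℝ,
      -α ^ 2 * deriv φ₂ x₂ =
        -α ^ 2 * φ₂ x₂ * F (α ^ 2 * φ₁ x₂) + A (α ^ 2 * φ₁ x₂) * φ₂ x₂ +
          k * deriv φ₂ x₂ + h (α ^ 2 * φ₁ x₂))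
    (u : ℝ × ℝ → ℝ)
    (hu : ∀ p : ℝ × ℝ, u p = φ₁ p.2 + Real.exp (-α ^ 2 * p.1) * φ₂ p.2) :
    ∀ p : ℝ × ℝ,
      pd2 (pd1 u) p =
        pd1 u p * F (pd1 u p + α ^ 2 * u p) + A (pd1 u p + α ^ 2 * u p) * u p +
          B (pd1 u p + α ^ 2 * u p) + k * pd2 u p +
          Real.exp (-α ^ 2 * p.1) * h (pd1 u p + α ^ 2 * u p) := by
  intro p
  have hd₁ := hφ₁.differentiable one_ne_zero
  have hd₂ := hφ₂.differentiable one_ne_zero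
  have hexp : DifferentiableAt ℝ (fun x => Real.exp (-α ^ 2 * x)) p.1 := by fun_prop
  have hu₁ := pd1_of_separated hu hexp
  rw [deriv_exp_const_mul] at hu₁
  have hu₁₂ := pd2_pd1_of_separated hu hexp (hd₂ p.2)
  rw [deriv_exp_const_mul] at hu₁₂
  have harg : pd1 u p + α ^ 2 * u p = α ^ 2 * φ₁ p.2 := by
    rw [hu₁, hu p]; ring
  rw [hu₁₂, harg, hu₁, hu p, pd2_of_separated (g := fun x => Real.exp (-α ^ 2 * x)) hu (hd₁ p.2)
    (hd₂ p.2)]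
  linear_combination Real.exp (-α ^ 2 * p.1) * hred2 p.2 - hred1 p.2

/-- If `φ₁, φ₂` solve the reduced system, then the ansatz
`u = φ₁(x₂) + e^{−α²x₁}φ₂(x₂)` solves the wave-type equation
`u_{x₁x₂} = u_{x₁}F(u_{x₁}+α²u) + A(u_{x₁}+α²u)u + B(u_{x₁}+α²u) + ku_{x₂}
 + e^{−α²x₁}h(u_{x₁}+α²u)`. -/
theorem reduced_system_implies_pde (α k : ℝ) (hα : α ≠ 0) (F A B h : ℝ → ℝ)
    (φ₁ φ₂ : ℝ → ℝ) (hφ₁ : ContDiff ℝ 1 φ₁) (hφ₂ : ContDiff ℝ 1 φ₂)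
    (hred1 : ∀ x₂ : ℝ,
      A (α ^ 2 * φ₁ x₂) * φ₁ x₂ + B (α ^ 2 * φ₁ x₂) + k * deriv φ₁ x₂ = 0)
    (hred2 : ∀ x₂ : ℝ,
      -α ^ 2 * deriv φ₂ x₂ =
        -α ^ 2 * φ₂ x₂ * F (α ^ 2 * φ₁ x₂) + A (α ^ 2 * φ₁ x₂) * φ₂ x₂ +
          k * deriv φ₂ x₂ + h (α ^ 2 * φ₁ x₂))
    (u : ℝ × ℝ → ℝ)
    (hu : ∀ p : ℝ × ℝ, u p = φ₁ p.2 + Real.exp (-α ^ 2 * p.1) * φ₂ p.2) :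
    ∀ p : ℝ × ℝ,
      pd2 (pd1 u) p =
        pd1 u p * F (pd1 u p + α ^ 2 * u p) + A (pd1 u p + α ^ 2 * u p) * u p +
          B (pd1 u p + α ^ 2 * u p) + k * pd2 u p +
          Real.exp (-α ^ 2 * p.1) * h (pd1 u p + α ^ 2 * u p) :=
  reduced_system_implies_pde_general α k F A B h φ₁ φ₂ hφ₁ hφ₂ hred1 hred2 u hu
end

section
/- Let α ≠ 0 and k be real constants, let F, A, B, h : ℝ → ℝ, let φ₁, φ₂ : ℝ → ℝ be continuously differentiable, and suppose that u(x₁, x₂) = φ₁(x₂) + e^{−α²x₁}φ₂(x₂) satisfies at every point (x₁, x₂) ∈ ℝ² the equation ∂²u/∂x₁∂x₂ = (∂u/∂x₁)·F(∂u/∂x₁ + α²u) + A(∂u/∂x₁ + α²u)·u + B(∂u/∂x₁ + α²u) + k·∂u/∂x₂ + e^{−α²x₁}·h(∂u/∂x₁ + α²u). Then φ₁ and φ₂ satisfy for all x₂ the reduced system A(α²φ₁)φ₁ + B(α²φ₁) + kφ₁′ = 0 and −α²φ₂′ = −α²φ₂F(α²φ₁) + A(α²φ₁)φ₂ + kφ₂′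 + h(α²φ₁). -/
open Real

theorem eq_zero_of_forall_add_exp_mul_eq_zero {c a b : ℝ} (hc : c ≠ 0)
    (h : ∀ x : ℝ, a + exp (c * x) * b = 0) : a = 0 ∧ b = 0 := by
  have h₀ := h 0
  have h₁ := h 1
  rw [mul_zero, exp_zero] at h₀
  have hexp : exp (c * 1) ≠ 1 := by simpa using hc
  have hb : b = 0 := by
    have : (exp (c * 1) - 1) * b = 0 := by linear_combination h₁ - h₀
    exact (mul_eq_zero.mp this).resolve_left (sub_ne_zero.mpr hexp)
  exact ⟨by linear_combination h₀ - hb, hb⟩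

section Separated

variable {u : ℝ × ℝ → ℝ} {f g : ℝ → ℝ} {c : ℝ}

theorem pd1_eq_of_separated (hu : ∀ p : ℝ × ℝ, u p = f p.2 + exp (c * p.1) * g p.2)
    (p : ℝ × ℝ) : pd1 u p = c * exp (c * p.1) * g p.2 := by
  have hline : (fun x₁ => u (x₁, p.2)) = fun x₁ => f p.2 + exp (c * x₁) * g p.2 :=
    funext fun x₁ => hu (x₁, p.2)
  have hderiv : HasDerivAt (fun x₁ => f p.2 + exp (c * x₁) * g p.2)
      (exp (c * p.1) * (c * 1) * g p.2) p.1 :=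
    (((hasDerivAt_id' p.1).const_mul c).exp.mul_const (g p.2)).const_add (f p.2)
  rw [pd1, hline, hderiv.deriv]
  ring

theorem pd2_eq_of_separated (hu : ∀ p : ℝ × ℝ, u p = f p.2 + exp (c * p.1) * g p.2)
    (p : ℝ × ℝ) (hf : DifferentiableAt ℝ f p.2) (hg : DifferentiableAt ℝ g p.2) :
    pd2 u p = deriv f p.2 + exp (c * p.1) * deriv g p.2 := by
  have hline : (fun x₂ => u (p.1, x₂)) = fun x₂ => f x₂ + exp (c * p.1) * g x₂ :=
    funext fun x₂ => hu (p.1, x₂)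
  rw [pd2, hline, deriv_fun_add hf (hg.const_mul _), deriv_const_mul _ hg]

theorem pd2_pd1_eq_of_separated (hu : ∀ p : ℝ × ℝ, u p = f p.2 + exp (c * p.1) * g p.2)
    (p : ℝ × ℝ) (hg : DifferentiableAt ℝ g p.2) :
    pd2 (pd1 u) p = c * exp (c * p.1) * deriv g p.2 := by
  have hline : (fun x₂ => pd1 u (p.1, x₂)) = fun x₂ => c * exp (c * p.1) * g x₂ :=
    funext fun x₂ => pd1_eq_of_separated hu (p.1, x₂)
  rw [pd2, hline, deriv_const_mul _ hg]

end Separated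

/-- If the ansatz `u = φ₁(x₂) + e^{−α²x₁}φ₂(x₂)` solves the wave-type equation
`u_{x₁x₂} = u_{x₁}F(u_{x₁}+α²u) + A(u_{x₁}+α²u)u + B(u_{x₁}+α²u) + ku_{x₂}
 + e^{−α²x₁}h(u_{x₁}+α²u)` everywhere, then `φ₁, φ₂` solve the reduced system. -/
theorem pde_implies_reduced_system (α k : ℝ) (hα : α ≠ 0) (F A B h : ℝ → ℝ)
    (φ₁ φ₂ : ℝ → ℝ) (hφ₁ : ContDiff ℝ 1 φ₁) (hφ₂ : ContDiff ℝ 1 φ₂)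
    (u : ℝ × ℝ → ℝ)
    (hu : ∀ p : ℝ × ℝ, u p = φ₁ p.2 + Real.exp (-α ^ 2 * p.1) * φ₂ p.2)
    (hpde : ∀ p : ℝ × ℝ,
      pd2 (pd1 u) p =
        pd1 u p * F (pd1 u p + α ^ 2 * u p) + A (pd1 u p + α ^ 2 * u p) * u p +
          B (pd1 u p + α ^ 2 * u p) + k * pd2 u p +
          Real.exp (-α ^ 2 * p.1) * h (pd1 u p + α ^ 2 * u p)) :
    ∀ x₂ : ℝ,
      A (α ^ 2 * φ₁ x₂) * φ₁ x₂ + B (α ^ 2 * φ₁ x₂) + k * deriv φ₁ x₂ = 0 ∧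
      -α ^ 2 * deriv φ₂ x₂ =
        -α ^ 2 * φ₂ x₂ * F (α ^ 2 * φ₁ x₂) + A (α ^ 2 * φ₁ x₂) * φ₂ x₂ +
          k * deriv φ₂ x₂ + h (α ^ 2 * φ₁ x₂) := by
  intro x₂
  have hφ₁x := hφ₁.differentiable one_ne_zero x₂
  have hφ₂x := hφ₂.differentiable one_ne_zero x₂
  have hargument : ∀ p : ℝ × ℝ, pd1 u p + α ^ 2 * u p = α ^ 2 * φ₁ p.2 := fun p => by
    rw [pd1_eq_of_separated hu, hu]
    ring
  have hsplit : ∀ x₁ : ℝ,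
      (A (α ^ 2 * φ₁ x₂) * φ₁ x₂ + B (α ^ 2 * φ₁ x₂) + k * deriv φ₁ x₂) +
        exp (-α ^ 2 * x₁) * (-α ^ 2 * φ₂ x₂ * F (α ^ 2 * φ₁ x₂) + A (α ^ 2 * φ₁ x₂) * φ₂ x₂ +
          k * deriv φ₂ x₂ + h (α ^ 2 * φ₁ x₂) - -α ^ 2 * deriv φ₂ x₂) = 0 := fun x₁ => by
    have hpt := hpde (x₁, x₂)
    rw [hargument, pd2_pd1_eq_of_separated hu (x₁, x₂) hφ₂x,
      pd2_eq_of_separated hu (x₁, x₂) hφ₁x hφ₂x, pd1_eq_of_separated hu, hu] at hpt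
    linear_combination -hpt
  obtain ⟨hφ₁eq, hφ₂eq⟩ :=
    eq_zero_of_forall_add_exp_mul_eq_zero (neg_ne_zero.mpr (pow_ne_zero 2 hα)) hsplit
  exact ⟨hφ₁eq, by linear_combination -hφ₂eq⟩
end

section
/- Let α ≠ 0 be a real constant, C₁ a real constant, F, h : ℝ → ℝ continuous functions, φ₁ : ℝ → ℝ a continuously differentiable function, and let G, P : ℝ → ℝ be differentiable with G′(x₂) = F(α²φ₁(x₂)) and P′(x₂) = h(α²φ₁(x₂))·e^{−G(x₂)} for all x₂. Then the function u(x₁, x₂) = φ₁(x₂) + (C₁ − P(x₂)/α²)·exp(G(x₂) − α²x₁) satisfies ∂u/∂x₁ + α²u = α²φ₁(x₂) and the nonlinear wave equation ∂²u/∂x₁∂x₂ = (∂u/∂x₁)·F(∂u/∂x₁ + α²u) + e^{−α²x₁}·h(∂u/∂x₁ + α²u) at every point (x₁, x₂) ∈ ℝ². -/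
open Real

theorem pd1_eq_of_eq_add_mul_exp {u : ℝ × ℝ → ℝ} {f g G : ℝ → ℝ} {k : ℝ}
    (hu : ∀ p : ℝ × ℝ, u p = f p.2 + g p.2 * exp (G p.2 - k * p.1)) (p : ℝ × ℝ) :
    pd1 u p = -k * g p.2 * exp (G p.2 - k * p.1) := by
  have hd : HasDerivAt (fun x₁ => f p.2 + g p.2 * exp (G p.2 - k * x₁))
      (-k * g p.2 * exp (G p.2 - k * p.1)) p.1 := by
    have hlin : HasDerivAt (fun x₁ : ℝ => G p.2 - k * x₁) (-k) p.1 := by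
      simpa using ((hasDerivAt_id p.1).const_mul k).const_sub (G p.2)
    exact ((hlin.exp.const_mul (g p.2)).const_add (f p.2)).congr_deriv (by ring)
  rw [pd1, funext fun x₁ => hu (x₁, p.2), hd.deriv]

theorem pd2_mul_exp {g G : ℝ → ℝ} {k : ℝ} {p : ℝ × ℝ}
    (hg : DifferentiableAt ℝ g p.2) (hG : DifferentiableAt ℝ G p.2) :
    pd2 (fun q => g q.2 * exp (G q.2 - k * q.1)) p =
      (deriv g p.2 + g p.2 * deriv G p.2) * exp (G p.2 - k * p.1) := by
  have hd : HasDerivAt (fun x₂ => g x₂ * exp (G x₂ - k * p.1))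
      ((deriv g p.2 + g p.2 * deriv G p.2) * exp (G p.2 - k * p.1)) p.2 :=
    (hg.hasDerivAt.mul (hG.hasDerivAt.sub_const (k * p.1)).exp).congr_deriv (by ring)
  exact hd.deriv

theorem solution_with_arbitrary_function_general (α : ℝ) (hα : α ≠ 0) (C₁ : ℝ)
    (F h : ℝ → ℝ)
    (φ₁ : ℝ → ℝ)
    (G P : ℝ → ℝ) (hG : Differentiable ℝ G) (hP : Differentiable ℝ P)
    (hG' : ∀ x₂ : ℝ, deriv G x₂ = F (α ^ 2 * φ₁ x₂))
    (hP' : ∀ x₂ : ℝ, deriv P x₂ = h (α ^ 2 * φ₁ x₂) * Real.exp (-G x₂))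
    (u : ℝ × ℝ → ℝ)
    (hu : ∀ p : ℝ × ℝ,
      u p = φ₁ p.2 + (C₁ - P p.2 / α ^ 2) * Real.exp (G p.2 - α ^ 2 * p.1)) :
    ∀ p : ℝ × ℝ,
      pd1 u p + α ^ 2 * u p = α ^ 2 * φ₁ p.2 ∧
      pd2 (pd1 u) p =
        pd1 u p * F (pd1 u p + α ^ 2 * u p) +
          Real.exp (-α ^ 2 * p.1) * h (pd1 u p + α ^ 2 * u p) := by
  have hpd1 := pd1_eq_of_eq_add_mul_exp (g := fun x₂ => C₁ - P x₂ / α ^ 2) hu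
  have hpd1_eq : pd1 u = fun q => (P q.2 - α ^ 2 * C₁) * exp (G q.2 - α ^ 2 * q.1) := by
    funext q
    rw [hpd1]
    field_simp
    ring
  intro p
  have hlin : pd1 u p + α ^ 2 * u p = α ^ 2 * φ₁ p.2 := by
    rw [hpd1, hu]
    ring
  refine ⟨hlin, ?_⟩
  have hexp : exp (-α ^ 2 * p.1) = exp (-G p.2) * exp (G p.2 - α ^ 2 * p.1) := by
    rw [← exp_add]
    ring_nf
  rw [hlin, hpd1_eq, pd2_mul_exp ((hP _).sub_const _) (hG _), deriv_sub_const, hP', hG', hexp]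
  ring

/-- For arbitrary smooth `φ₁`, the function
`u = φ₁(x₂) + (C₁ − P(x₂)/α²)·exp(G(x₂) − α²x₁)`, where `G′ = F(α²φ₁)` and
`P′ = h(α²φ₁)e^{−G}`, satisfies `u_{x₁} + α²u = α²φ₁(x₂)` and the nonlinear wave equation
`u_{x₁x₂} = u_{x₁}F(u_{x₁}+α²u) + e^{−α²x₁}h(u_{x₁}+α²u)`. -/
theorem solution_with_arbitrary_function (α : ℝ) (hα : α ≠ 0) (C₁ : ℝ)
    (F h : ℝ → ℝ) (hF : Continuous F) (hh : Continuous h)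
    (φ₁ : ℝ → ℝ) (hφ₁ : ContDiff ℝ 1 φ₁)
    (G P : ℝ → ℝ) (hG : Differentiable ℝ G) (hP : Differentiable ℝ P)
    (hG' : ∀ x₂ : ℝ, deriv G x₂ = F (α ^ 2 * φ₁ x₂))
    (hP' : ∀ x₂ : ℝ, deriv P x₂ = h (α ^ 2 * φ₁ x₂) * Real.exp (-G x₂))
    (u : ℝ × ℝ → ℝ)
    (hu : ∀ p : ℝ × ℝ,
      u p = φ₁ p.2 + (C₁ - P p.2 / α ^ 2) * Real.exp (G p.2 - α ^ 2 * p.1)) :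
    ∀ p : ℝ × ℝ,
      pd1 u p + α ^ 2 * u p = α ^ 2 * φ₁ p.2 ∧
      pd2 (pd1 u) p =
        pd1 u p * F (pd1 u p + α ^ 2 * u p) +
          Real.exp (-α ^ 2 * p.1) * h (pd1 u p + α ^ 2 * u p) :=
  solution_with_arbitrary_function_general α hα C₁ F h φ₁ G P hG hP hG' hP' u hu
end

section
/- Let r > 1 be a real number, set a = √(r(r+1)/(2(r−1))) and b = √(2(r+1)/(r(r−1))), let C₁ be a real constant, and let I = {ω ∈ ℝ : aω + C₁ > 0}. Then the functions φ₁(ω) = (aω + C₁)^{2/(r+1)} and φ₂(ω) = b·(aω + C₁)^{(1−r)/(r+1)} are differentiable on I and satisfy φ₂′(ω)·φ₁(ω)^r = −1 and (r/(r+1))·φ₂(ω) = φ₁′(ω) for all ω ∈ I. -/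
/-! Both components are powers of the affine function `t = aω + C₁`. With `φ₁ = t^p` and
`φ₂ = b t^(p-1)`, the first equation fixes the exponent through `(p - 2) + p r = 0`, i.e.
`p = 2/(r+1)`, and reduces to `ab(1-r)/(r+1) = -1`; the second reduces to `r b = 2a`. The two
square roots `a`, `b` are exactly the solution of these two coefficient equations. -/

open Real

theorem hasDerivAt_affine_rpow {a C p ω : ℝ} (h : 0 < a * ω + C) :
    HasDerivAt (fun x => (a * x + C) ^ p) (a * p * (a * ω + C) ^ (p - 1)) ω := by
  simpa using (((hasDerivAt_id ω).const_mul a).add_const C).rpow_const (Or.inl h.ne')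

theorem sqrt_mul_sqrt_eq_of_one_lt {r : ℝ} (hr : 1 < r) :
    √(r * (r + 1) / (2 * (r - 1))) * √(2 * (r + 1) / (r * (r - 1))) = (r + 1) / (r - 1) := by
  have hr1 : 0 < r - 1 := by linarith
  rw [← sqrt_mul (by positivity), ← sqrt_sq (by positivity : 0 ≤ (r + 1) / (r - 1))]
  congr 1
  field_simp

theorem mul_sqrt_eq_two_mul_sqrt_of_one_lt {r : ℝ} (hr : 1 < r) :
    r * √(2 * (r + 1) / (r * (r - 1))) = 2 * √(r * (r + 1) / (2 * (r - 1))) := by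
  have hr1 : 0 < r - 1 := by linarith
  refine (sq_eq_sq₀ (by positivity) (by positivity)).1 ?_
  rw [mul_pow, mul_pow, sq_sqrt (by positivity), sq_sqrt (by positivity)]
  field_simp

theorem rpow_first_reduced_eq {r a b t : ℝ} (hr₁ : r - 1 ≠ 0) (hr₂ : r + 1 ≠ 0)
    (hab : a * b = (r + 1) / (r - 1)) (ht : 0 < t) :
    b * (a * ((1 - r) / (r + 1)) * t ^ ((1 - r) / (r + 1) - 1)) * (t ^ (2 / (r + 1))) ^ r
      = -1 := by
  have hexp : (1 - r) / (r + 1) - 1 + 2 / (r + 1) * r = 0 := by field_simp; ring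
  calc b * (a * ((1 - r) / (r + 1)) * t ^ ((1 - r) / (r + 1) - 1)) * (t ^ (2 / (r + 1))) ^ r
      = a * b * ((1 - r) / (r + 1)) * t ^ ((1 - r) / (r + 1) - 1 + 2 / (r + 1) * r) := by
        rw [← rpow_mul ht.le, rpow_add ht]; ring
    _ = -1 := by
        rw [hexp, rpow_zero, hab]
        field_simp
        ring

theorem rpow_second_reduced_eq {r a b t : ℝ} (hr : r + 1 ≠ 0) (hrb : r * b = 2 * a) :
    r / (r + 1) * (b * t ^ ((1 - r) / (r + 1))) = a * (2 / (r + 1)) * t ^ (2 / (r + 1) - 1) := by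
  have hexp : (1 - r) / (r + 1) = 2 / (r + 1) - 1 := by field_simp; ring
  rw [hexp]
  linear_combination t ^ (2 / (r + 1) - 1) / (r + 1) * hrb

/-- For `r > 1`, `a = √(r(r+1)/(2(r−1)))`, `b = √(2(r+1)/(r(r−1)))`, the functions
`φ₁(ω) = (aω + C₁)^{2/(r+1)}` and `φ₂(ω) = b(aω + C₁)^{(1−r)/(r+1)}` are differentiable
on `{ω : aω + C₁ > 0}` and solve the reduced system `φ₂′φ₁^r = −1`, `(r/(r+1))φ₂ = φ₁′`. -/
theorem explicit_solution_of_reduced_system (r : ℝ) (hr : 1 < r) (C₁ : ℝ)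
    (a b : ℝ)
    (ha : a = Real.sqrt (r * (r + 1) / (2 * (r - 1))))
    (hb : b = Real.sqrt (2 * (r + 1) / (r * (r - 1))))
    (I : Set ℝ) (hI : I = {ω : ℝ | 0 < a * ω + C₁})
    (φ₁ φ₂ : ℝ → ℝ)
    (hφ₁ : ∀ ω : ℝ, φ₁ ω = (a * ω + C₁) ^ (2 / (r + 1)))
    (hφ₂ : ∀ ω : ℝ, φ₂ ω = b * (a * ω + C₁) ^ ((1 - r) / (r + 1))) :
    (∀ ω ∈ I, DifferentiableAt ℝ φ₁ ω ∧ DifferentiableAt ℝ φ₂ ω) ∧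
      ∀ ω ∈ I, deriv φ₂ ω * φ₁ ω ^ r = -1 ∧ r / (r + 1) * φ₂ ω = deriv φ₁ ω := by
  have hab : a * b = (r + 1) / (r - 1) := ha ▸ hb ▸ sqrt_mul_sqrt_eq_of_one_lt hr
  have hrb : r * b = 2 * a := ha ▸ hb ▸ mul_sqrt_eq_two_mul_sqrt_of_one_lt hr
  obtain rfl := funext hφ₁
  obtain rfl := funext hφ₂
  subst hI
  have hd₁ {ω} (hω : 0 < a * ω + C₁) := hasDerivAt_affine_rpow (p := 2 / (r + 1)) hω
  have hd₂ {ω} (hω : 0 < a * ω + C₁) :=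
    (hasDerivAt_affine_rpow (p := (1 - r) / (r + 1)) hω).const_mul b
  refine ⟨fun ω hω => ⟨(hd₁ hω).differentiableAt, (hd₂ hω).differentiableAt⟩,
    fun ω hω => ⟨?_, ?_⟩⟩
  · rw [(hd₂ hω).deriv]
    exact rpow_first_reduced_eq (by linarith) (by linarith) hab hω
  · rw [(hd₁ hω).deriv]
    exact rpow_second_reduced_eq (by linarith) hrb
end

section
/- Let f, φ : ℝ → ℝ be continuously differentiable with f(s)·f′(s)·φ(s) = −1 for all s ∈ ℝ, let D ⊆ ℝ² be open, and let u : D → ℝ be twice continuously differentiable in (t, x) such that at every point (t, x) ∈ D, with ω = x·u_x(t,x) − 2u(t,x), one has u_x(t,x) = f(ω), u_t(t,x) = exp(φ(ω) + x/f(ω)), f(ω) ≠ 0, f′(ω) ≠ 0, and 1 − x·f′(ω) ≠ 0. Then at every point of D: u_{xx} = −f′(ω)·f(ω)/(1 − x·f′(ω)) ≠ 0 and u_t = exp(1/u_{xx}), i.e. u solves the nonlinear evolution equation u_t = e^{1/u_{xx}}. -/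
/-!
Differentiating the ansatz `u_x = f(ω)` in `x`, with `ω_x = x u_xx − u_x`, gives the linear relation
`u_xx = f′(ω) (x u_xx − f(ω))`, hence `u_xx (1 − x f′(ω)) = −f′(ω) f(ω)`. Since `f f′ φ = −1`, the
right-hand side is nonzero, and `1 / u_xx = φ(ω) + x / f(ω)`, which is the exponent in the ansatz for `u_t`.
-/

/-- Partial derivative with respect to the first variable (time `t`). -/
noncomputable def pdt (u : ℝ × ℝ → ℝ) (p : ℝ × ℝ) : ℝ := deriv (fun t => u (t, p.2)) p.1

/-- Partial derivative with respect to the second variable (space `x`). -/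
noncomputable def pdx (u : ℝ × ℝ → ℝ) (p : ℝ × ℝ) : ℝ := deriv (fun x => u (p.1, x)) p.2

open Filter Topology

section PartialDerivative

variable {v : ℝ × ℝ → ℝ} {p : ℝ × ℝ}

theorem HasFDerivAt.hasDerivAt_snd_slice {L : ℝ × ℝ →L[ℝ] ℝ} (h : HasFDerivAt v L p) :
    HasDerivAt (fun x => v (p.1, x)) (L (0, 1)) p.2 :=
  h.comp_hasDerivAt p.2 ((hasDerivAt_const _ _).prodMk (hasDerivAt_id _))

theorem DifferentiableAt.pdx_eq_fderiv (h : DifferentiableAt ℝ v p) :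
    pdx v p = fderiv ℝ v p (0, 1) :=
  h.hasFDerivAt.hasDerivAt_snd_slice.deriv

theorem DifferentiableAt.hasDerivAt_pdx (h : DifferentiableAt ℝ v p) :
    HasDerivAt (fun x => v (p.1, x)) (pdx v p) p.2 :=
  h.pdx_eq_fderiv ▸ h.hasFDerivAt.hasDerivAt_snd_slice

theorem ContDiffOn.differentiableAt_pdx {D : Set (ℝ × ℝ)} (hv : ContDiffOn ℝ 2 v D)
    (hD : IsOpen D) (hp : p ∈ D) : DifferentiableAt ℝ (pdx v) p := by
  have hF : ContDiffOn ℝ 1 (fun q => fderiv ℝ v q (0, 1)) D :=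
    (hv.fderiv_of_isOpen hD le_rfl).clm_apply contDiffOn_const
  have hpdx : pdx v =ᶠ[𝓝 p] fun q => fderiv ℝ v q (0, 1) :=
    eventually_of_mem (hD.mem_nhds hp) fun q hq =>
      ((hv.differentiableOn two_ne_zero).differentiableAt (hD.mem_nhds hq)).pdx_eq_fderiv
  exact ((hF.differentiableOn one_ne_zero).differentiableAt (hD.mem_nhds hp)).congr_of_eventuallyEq
    hpdx

end PartialDerivative

theorem eq_deriv_mul_of_eventuallyEq_comp {f g G : ℝ → ℝ} {x₀ A : ℝ}
    (hg : HasDerivAt g (G x₀) x₀) (hG : HasDerivAt G A x₀)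
    (hf : DifferentiableAt ℝ f (x₀ * G x₀ - 2 * g x₀))
    (hGf : ∀ᶠ x in 𝓝 x₀, G x = f (x * G x - 2 * g x)) :
    A = deriv f (x₀ * G x₀ - 2 * g x₀) * (x₀ * A - G x₀) := by
  have hω : HasDerivAt (fun x => x * G x - 2 * g x) (x₀ * A - G x₀) x₀ :=
    (((hasDerivAt_id' x₀).mul hG).sub (hg.const_mul 2)).congr_deriv (by ring)
  exact hG.unique ((hf.hasDerivAt.comp x₀ hω).congr_of_eventuallyEq hGf)

theorem eq_neg_mul_div_and_one_div_eq_of_eq_mul_sub {A a b c x : ℝ} (habc : b * a * c = -1)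
    (hA : A = a * (x * A - b)) :
    A = -(a * b) / (1 - x * a) ∧ A ≠ 0 ∧ c + x / b = 1 / A := by
  have hab : a * b ≠ 0 := by
    have hbac : b * a * c ≠ 0 := by rw [habc]; norm_num
    exact mul_comm b a ▸ left_ne_zero_of_mul hbac
  have hprod : A * (1 - x * a) = -(a * b) := by linear_combination hA
  have hA0 : A ≠ 0 := left_ne_zero_of_mul (hprod ▸ neg_ne_zero.mpr hab)
  have hd : 1 - x * a ≠ 0 := right_ne_zero_of_mul (hprod ▸ neg_ne_zero.mpr hab)
  refine ⟨(eq_div_iff hd).mpr hprod, hA0, ?_⟩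
  have ha : a ≠ 0 := left_ne_zero_of_mul hab
  have hb : b ≠ 0 := right_ne_zero_of_mul hab
  field_simp
  refine mul_left_cancel₀ ha ?_
  linear_combination A * habc - hprod

theorem ansatz_solves_evolution_equation_general (f φ : ℝ → ℝ)
    (hf : ContDiff ℝ 1 f)
    (hode : ∀ s : ℝ, f s * deriv f s * φ s = -1)
    (D : Set (ℝ × ℝ)) (hD : IsOpen D)
    (u : ℝ × ℝ → ℝ) (hu : ContDiffOn ℝ 2 u D)
    (hux : ∀ p ∈ D, pdx u p = f (p.2 * pdx u p - 2 * u p))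
    (hut : ∀ p ∈ D, pdt u p =
      Real.exp (φ (p.2 * pdx u p - 2 * u p) + p.2 / f (p.2 * pdx u p - 2 * u p))) :
    ∀ p ∈ D,
      pdx (pdx u) p =
        -(deriv f (p.2 * pdx u p - 2 * u p) * f (p.2 * pdx u p - 2 * u p)) /
          (1 - p.2 * deriv f (p.2 * pdx u p - 2 * u p)) ∧
      pdx (pdx u) p ≠ 0 ∧
      pdt u p = Real.exp (1 / pdx (pdx u) p) := by
  rintro ⟨t, x⟩ hp
  have hslice : ∀ᶠ y in 𝓝 x, (t, y) ∈ D :=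
    (continuous_const.prodMk continuous_id).continuousAt.eventually (hD.eventually_mem hp)
  have hrel := eq_deriv_mul_of_eventuallyEq_comp
    (G := fun y => pdx u (t, y)) (g := fun y => u (t, y))
    ((hu.differentiableOn two_ne_zero).differentiableAt (hD.mem_nhds hp)).hasDerivAt_pdx
    (hu.differentiableAt_pdx hD hp).hasDerivAt_pdx (hf.differentiable one_ne_zero _)
    (hslice.mono fun y hy => hux (t, y) hy)
  dsimp only at hrel hux hut ⊢
  set ω := x * pdx u (t, x) - 2 * u (t, x)
  rw [hux (t, x) hp] at hrel
  obtain ⟨hxx, hxx0, hexp⟩ := eq_neg_mul_div_and_one_div_eq_of_eq_mul_sub (hode _) hrel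
  exact ⟨hxx, hxx0, by rw [hut (t, x) hp, hexp]⟩

/-- If `f, φ` satisfy `f f′ φ = −1` and `u` satisfies the ansatz `u_x = f(ω)`,
`u_t = exp(φ(ω) + x/f(ω))` with `ω = x u_x − 2u` on an open set `D`, where
`f(ω) ≠ 0`, `f′(ω) ≠ 0` and `1 − x f′(ω) ≠ 0`, then on `D` one has
`u_{xx} = −f′(ω)f(ω)/(1 − x f′(ω)) ≠ 0` and `u_t = exp(1/u_{xx})`. -/
theorem ansatz_solves_evolution_equation (f φ : ℝ → ℝ)
    (hf : ContDiff ℝ 1 f) (hφ : ContDiff ℝ 1 φ)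
    (hode : ∀ s : ℝ, f s * deriv f s * φ s = -1)
    (D : Set (ℝ × ℝ)) (hD : IsOpen D)
    (u : ℝ × ℝ → ℝ) (hu : ContDiffOn ℝ 2 u D)
    (hux : ∀ p ∈ D, pdx u p = f (p.2 * pdx u p - 2 * u p))
    (hut : ∀ p ∈ D, pdt u p =
      Real.exp (φ (p.2 * pdx u p - 2 * u p) + p.2 / f (p.2 * pdx u p - 2 * u p)))
    (hf0 : ∀ p ∈ D, f (p.2 * pdx u p - 2 * u p) ≠ 0)
    (hf'0 : ∀ p ∈ D, deriv f (p.2 * pdx u p - 2 * u p) ≠ 0)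
    (hden : ∀ p ∈ D, 1 - p.2 * deriv f (p.2 * pdx u p - 2 * u p) ≠ 0) :
    ∀ p ∈ D,
      pdx (pdx u) p =
        -(deriv f (p.2 * pdx u p - 2 * u p) * f (p.2 * pdx u p - 2 * u p)) /
          (1 - p.2 * deriv f (p.2 * pdx u p - 2 * u p)) ∧
      pdx (pdx u) p ≠ 0 ∧
      pdt u p = Real.exp (1 / pdx (pdx u) p) :=
  ansatz_solves_evolution_equation_general f φ hf hode D hD u hu hux hut
end
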